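/- Let m ≥ 1 be an integer and let M be a symmetric m×m integer matrix with M_{i,i+1} = M_{i+1,i} = 1 for 1 ≤ i ≤ m−1, all other off-diagonal entries equal to 0, M_{ii} ≤ −2 for every i, and M negative definite. Let a ∈ ℝ^m be the unique vector with (Ma)_1 = −1 − M_{11} and (Ma)_i = −2 − M_{ii} for 2 ≤ i ≤ m. Then a_i > −1 for every i. (Geometrically: if X∋x is an A-type klt surface germ and E is a prime divisor on X whose strict transform on the minimal resolution is smooth and meets the exceptional chain F_1—⋯—F_m transversally in exactly one point of the tail F_1, then (X∋x, E) is plt, i.e. every log discrepancy a(F_i, X, E) = 1 + a_i is positive.) -/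
import Mathlib


/-- Let `M` be the symmetric negative definite intersection matrix of a chain
`F_1 — F_2 — ⋯ — F_m` (consecutive entries `1`, all other off-diagonal entries
`0`, diagonal entries `≤ -2`), and let `a` be the unique vector with
`(M a)_1 = -1 - M_{11}` and `(M a)_i = -2 - M_{ii}` for `i ≥ 2`.  Then
`a i > -1` for every `i` (geometrically: if `X ∋ x` is an `A`-type klt surface
germ and `E` is a prime divisor whose strict transform meets the exceptional
chain transversally in exactly one point of the tail `F_1`, then `(X ∋ x, E)`
is plt). -/
theorem stmt_6 (m : ℕ) (hm : 1 ≤ m) (M : Matrix (Fin m) (Fin m) ℤ)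
    (hsymm : ∀ i j, M i j = M j i)
    (hchain : ∀ i j : Fin m, i.val + 1 = j.val → M i j = 1)
    (hzero : ∀ i j : Fin m, i ≠ j → i.val + 1 ≠ j.val → j.val + 1 ≠ i.val →
      M i j = 0)
    (hdiag : ∀ i, M i i ≤ -2)
    (hnegdef : ∀ x : Fin m → ℝ, x ≠ 0 → ∑ i, ∑ j, x i * (M i j : ℝ) * x j < 0)
    (a : Fin m → ℝ)
    (ha0 : ∑ j, (M ⟨0, by omega⟩ j : ℝ) * a j
      = -1 - (M ⟨0, by omega⟩ ⟨0, by omega⟩ : ℝ))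
    (ha : ∀ i : Fin m, i.val ≠ 0 → ∑ j, (M i j : ℝ) * a j = -2 - (M i i : ℝ)) :
    ∀ i, -1 < a i := by
  -- the log discrepancies
  set b : Fin m → ℝ := fun i => a i + 1 with hbdef
  -- off-diagonal entries are nonnegative
  have hoff : ∀ i j : Fin m, i ≠ j → (0 : ℝ) ≤ (M i j : ℝ) := by
    intro i j hij
    by_cases h1 : i.val + 1 = j.val
    · rw [hchain i j h1]; norm_num
    · by_cases h2 : j.val + 1 = i.val
      · rw [hsymm i j, hchain j i h2]; norm_num
      · rw [hzero i j hij h1 h2]; norm_num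
  -- indicator sums are at most 1
  have hind1 : ∀ c : ℕ, (∑ j : Fin m, if j.val = c then (1:ℝ) else 0) ≤ 1 := by
    intro c
    by_cases hc : c < m
    · have he : ∀ j : Fin m, (if j.val = c then (1:ℝ) else 0)
          = if j = ⟨c, hc⟩ then (1:ℝ) else 0 := by
        intro j; simp [Fin.ext_iff]
      rw [Finset.sum_congr rfl (fun j _ => he j)]
      simp
    · have he : ∀ j : Fin m, (if j.val = c then (1:ℝ) else 0) = 0 := by
        intro j
        have hj := j.isLt
        have : j.val ≠ c := by omega
        simp [this]
      rw [Finset.sum_congr rfl (fun j _ => he j)]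
      norm_num
  have hind1z : ∀ c : ℕ, m ≤ c → (∑ j : Fin m, if j.val = c then (1:ℝ) else 0) = 0 := by
    intro c hc
    have he : ∀ j : Fin m, (if j.val = c then (1:ℝ) else 0) = 0 := by
      intro j
      have hj := j.isLt
      have : j.val ≠ c := by omega
      simp [this]
    rw [Finset.sum_congr rfl (fun j _ => he j)]
    simp
  have hind2 : ∀ c : ℕ, (∑ j : Fin m, if j.val + 1 = c then (1:ℝ) else 0) ≤ 1 := by
    intro c
    by_cases hc : 1 ≤ c
    · have he : ∀ j : Fin m, (if j.val + 1 = c then (1:ℝ) else 0)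
          = if j.val = c - 1 then (1:ℝ) else 0 := by
        intro j
        have : j.val + 1 = c ↔ j.val = c - 1 := by omega
        simp [this]
      rw [Finset.sum_congr rfl (fun j _ => he j)]
      exact hind1 (c - 1)
    · have he : ∀ j : Fin m, (if j.val + 1 = c then (1:ℝ) else 0) = 0 := by
        intro j
        have : j.val + 1 ≠ c := by omega
        simp [this]
      rw [Finset.sum_congr rfl (fun j _ => he j)]
      norm_num
  have hind2z : ∀ c : ℕ, c = 0 → (∑ j : Fin m, if j.val + 1 = c then (1:ℝ) else 0) = 0 := by
    intro c hc
    have he : ∀ j : Fin m, (if j.val + 1 = c then (1:ℝ) else 0) = 0 := by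
      intro j
      have : j.val + 1 ≠ c := by omega
      simp [this]
    rw [Finset.sum_congr rfl (fun j _ => he j)]
    simp
  -- termwise bound on off-diagonal entries by indicators
  have hterm : ∀ i j : Fin m, j ≠ i → (M i j : ℝ)
      ≤ (if j.val = i.val + 1 then (1:ℝ) else 0) + (if j.val + 1 = i.val then (1:ℝ) else 0) := by
    intro i j hji
    by_cases h1 : j.val = i.val + 1
    · have : M i j = 1 := hchain i j h1.symm
      rw [this]
      have h2 : (0:ℝ) ≤ if j.val + 1 = i.val then (1:ℝ) else 0 := by positivity
      rw [if_pos h1]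
      push_cast
      linarith
    · by_cases h2 : j.val + 1 = i.val
      · have : M i j = 1 := by rw [hsymm i j]; exact hchain j i h2
        rw [this, if_neg h1, if_pos h2]
        norm_num
      · have : M i j = 0 := hzero i j (fun h => hji h.symm) (fun h => h1 h.symm) h2
        rw [this, if_neg h1, if_neg h2]
        norm_num
  -- row sum bound
  have hrow : ∀ i : Fin m, (∑ j, (M i j : ℝ))
      ≤ (M i i : ℝ) + (∑ j : Fin m, if j.val = i.val + 1 then (1:ℝ) else 0)
        + (∑ j : Fin m, if j.val + 1 = i.val then (1:ℝ) else 0) := by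
    intro i
    rw [← Finset.add_sum_erase _ _ (Finset.mem_univ i)]
    have h1 : (∑ j ∈ Finset.univ.erase i, (M i j : ℝ))
        ≤ ∑ j ∈ Finset.univ.erase i,
            ((if j.val = i.val + 1 then (1:ℝ) else 0) + (if j.val + 1 = i.val then (1:ℝ) else 0)) := by
      apply Finset.sum_le_sum
      intro j hj
      exact hterm i j (Finset.mem_erase.1 hj).1
    have h2 : (∑ j ∈ Finset.univ.erase i,
            ((if j.val = i.val + 1 then (1:ℝ) else 0) + (if j.val + 1 = i.val then (1:ℝ) else 0)))
        ≤ ∑ j : Fin m,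
            ((if j.val = i.val + 1 then (1:ℝ) else 0) + (if j.val + 1 = i.val then (1:ℝ) else 0)) := by
      apply Finset.sum_le_sum_of_subset_of_nonneg (Finset.erase_subset _ _)
      intro j _ _
      positivity
    rw [Finset.sum_add_distrib] at h1
    rw [Finset.sum_add_distrib] at h2
    rw [Finset.sum_add_distrib] at h2
    linarith
  -- (M b)_i in terms of (M a)_i and row sums
  have hMbrow : ∀ i : Fin m, (∑ j, (M i j : ℝ) * b j)
      = (∑ j, (M i j : ℝ) * a j) + ∑ j, (M i j : ℝ) := by
    intro i
    rw [← Finset.sum_add_distrib]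
    apply Finset.sum_congr rfl
    intro j _
    simp [hbdef, mul_add]
  -- (M b)_i ≤ 0 for all i
  have hMb_le : ∀ i : Fin m, (∑ j, (M i j : ℝ) * b j) ≤ 0 := by
    intro i
    rw [hMbrow]
    by_cases hi : i.val = 0
    · have hieq : i = ⟨0, by omega⟩ := by exact Fin.ext hi
      rw [hieq]
      rw [ha0]
      have h1 := hrow ⟨0, by omega⟩
      have h2 := hind1 (0 + 1)
      have h3 := hind2z ((⟨0, by omega⟩ : Fin m) : Fin m).val rfl
      simp only [Fin.val_mk] at h1 h3 ⊢
      rw [h3] at h1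
      linarith
    · rw [ha i hi]
      have h1 := hrow i
      have h2 := hind1 (i.val + 1)
      have h3 := hind2 i.val
      linarith
  -- (M b) at the last index is ≤ -1
  have hMb_last : (∑ j, (M ⟨m - 1, by omega⟩ j : ℝ) * b j) ≤ -1 := by
    set l : Fin m := ⟨m - 1, by omega⟩ with hldef
    rw [hMbrow]
    have h1 := hrow l
    have h2 : (∑ j : Fin m, if j.val = l.val + 1 then (1:ℝ) else 0) = 0 := by
      apply hind1z
      simp [hldef]
      omega
    rw [h2] at h1
    by_cases hl : l.val = 0
    · have hleq : l = ⟨0, by omega⟩ := Fin.ext hl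
      have h3 := hind2z l.val hl
      rw [h3] at h1
      rw [hleq] at h1 ⊢
      rw [ha0]
      linarith
    · rw [ha l hl]
      have h3 := hind2 l.val
      linarith
  -- b is nonnegative
  have hbnn : ∀ i, 0 ≤ b i := by
    by_contra hcon
    push_neg at hcon
    obtain ⟨k, hk⟩ := hcon
    set x : Fin m → ℝ := fun i => max (-(b i)) 0 with hxdef
    set p : Fin m → ℝ := fun i => max (b i) 0 with hpdef
    have hx0 : ∀ i, 0 ≤ x i := fun i => le_max_right _ _
    have hp0 : ∀ i, 0 ≤ p i := fun i => le_max_right _ _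
    have hxp : ∀ i, x i * p i = 0 := by
      intro i
      rcases le_total (b i) 0 with h | h
      · have : p i = 0 := max_eq_right h
        rw [this, mul_zero]
      · have : x i = 0 := max_eq_right (by linarith)
        rw [this, zero_mul]
    have hpxb : ∀ i, x i = p i - b i := by
      intro i
      rcases le_total (b i) 0 with h | h
      · have h1 : x i = -(b i) := max_eq_left (by linarith)
        have h2 : p i = 0 := max_eq_right h
        rw [h1, h2]; ring
      · have h1 : x i = 0 := max_eq_right (by linarith)
        have h2 : p i = b i := max_eq_left h
        rw [h1, h2]; ring
    have hxne : x ≠ 0 := by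
      intro h0
      have h1 : x k = 0 := congrFun h0 k
      have h2 : -(b k) ≤ x k := le_max_left _ _
      rw [h1] at h2
      linarith
    have hneg := hnegdef x hxne
    have key : (0:ℝ) ≤ ∑ i, ∑ j, x i * (M i j : ℝ) * x j := by
      apply Finset.sum_nonneg
      intro i _
      have h1 : (∑ j, x i * (M i j : ℝ) * x j) = x i * ∑ j, (M i j : ℝ) * x j := by
        rw [Finset.mul_sum]
        exact Finset.sum_congr rfl fun j _ => (mul_assoc _ _ _)
      rw [h1]
      have h2 : (∑ j, (M i j : ℝ) * x j)
          = (∑ j, (M i j : ℝ) * p j) - ∑ j, (M i j : ℝ) * b j := by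
        rw [← Finset.sum_sub_distrib]
        apply Finset.sum_congr rfl
        intro j _
        rw [← mul_sub, ← hpxb]
      rw [h2, mul_sub]
      have h4 : 0 ≤ x i * ∑ j, (M i j : ℝ) * p j := by
        rw [Finset.mul_sum]
        apply Finset.sum_nonneg
        intro j _
        by_cases hij : j = i
        · subst hij
          have : x j * ((M j j : ℝ) * p j) = (M j j : ℝ) * (x j * p j) := by ring
          rw [this, hxp j, mul_zero]
        · exact mul_nonneg (hx0 i) (mul_nonneg (hoff i j (fun h => hij h.symm)) (hp0 j))
      have h5 : x i * (∑ j, (M i j : ℝ) * b j) ≤ 0 := by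
        have := mul_le_mul_of_nonneg_left (hMb_le i) (hx0 i)
        simpa using this
      linarith
    linarith
  -- propagation of zeroes up the chain
  have hstep : ∀ k j : Fin m, b k = 0 → k.val + 1 = j.val → b j = 0 := by
    intro k j hk hkj
    have hM := hMb_le k
    have hsplit : (∑ t, (M k t : ℝ) * b t)
        = (M k k : ℝ) * b k + ∑ t ∈ Finset.univ.erase k, (M k t : ℝ) * b t :=
      (Finset.add_sum_erase _ _ (Finset.mem_univ k)).symm
    have hnn : ∀ t ∈ Finset.univ.erase k, (0:ℝ) ≤ (M k t : ℝ) * b t := by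
      intro t ht
      exact mul_nonneg (hoff k t (fun h => (Finset.mem_erase.1 ht).1 h.symm)) (hbnn t)
    have hjk : j ∈ Finset.univ.erase k := by
      apply Finset.mem_erase.2
      constructor
      · intro h
        rw [h] at hkj
        omega
      · exact Finset.mem_univ j
    have hle := Finset.single_le_sum hnn hjk
    have hsum_le : (∑ t ∈ Finset.univ.erase k, (M k t : ℝ) * b t) ≤ 0 := by
      rw [hsplit, hk, mul_zero, zero_add] at hM
      exact hM
    have hMkj : (M k j : ℝ) = 1 := by
      rw [hchain k j hkj]; norm_num
    rw [hMkj, one_mul] at hle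
    exact le_antisymm (le_trans hle hsum_le) (hbnn j)
  -- b is positive at the last index
  have hlastpos : 0 < b ⟨m - 1, by omega⟩ := by
    rcases lt_or_eq_of_le (hbnn ⟨m - 1, by omega⟩) with h | h
    · exact h
    · exfalso
      have hM := hMb_last
      have hsplit : (∑ t, (M ⟨m - 1, by omega⟩ t : ℝ) * b t)
          = (M ⟨m - 1, by omega⟩ ⟨m - 1, by omega⟩ : ℝ) * b ⟨m - 1, by omega⟩
            + ∑ t ∈ Finset.univ.erase ⟨m - 1, by omega⟩, (M ⟨m - 1, by omega⟩ t : ℝ) * b t :=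
        (Finset.add_sum_erase _ _ (Finset.mem_univ _)).symm
      have hnn : (0:ℝ) ≤ ∑ t ∈ Finset.univ.erase (⟨m - 1, by omega⟩ : Fin m),
          (M ⟨m - 1, by omega⟩ t : ℝ) * b t := by
        apply Finset.sum_nonneg
        intro t ht
        exact mul_nonneg (hoff _ t (fun hh => (Finset.mem_erase.1 ht).1 hh.symm)) (hbnn t)
      rw [hsplit, ← h, mul_zero, zero_add] at hM
      linarith
  -- b is positive everywhere
  have hbpos : ∀ i, 0 < b i := by
    intro i
    rcases lt_or_eq_of_le (hbnn i) with h | h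
    · exact h
    · exfalso
      have hup : ∀ d : ℕ, ∀ hd : i.val + d < m, b ⟨i.val + d, hd⟩ = 0 := by
        intro d
        induction d with
        | zero => intro hd; have : (⟨i.val + 0, hd⟩ : Fin m) = i := by
                    apply Fin.ext; simp
                  rw [this]; exact h.symm
        | succ n ih =>
            intro hd
            have hn : i.val + n < m := by omega
            exact hstep ⟨i.val + n, hn⟩ ⟨i.val + (n + 1), hd⟩ (ih hn) (by simp; omega)
      have hlast := hup (m - 1 - i.val) (by omega)
      have heq : (⟨i.val + (m - 1 - i.val), by omega⟩ : Fin m) = ⟨m - 1, by omega⟩ := by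
        apply Fin.ext
        simp
        omega
      rw [heq] at hlast
      rw [hlast] at hlastpos
      exact lt_irrefl 0 hlastpos
  intro i
  have := hbpos i
  simp only [hbdef] at this
  linarith
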